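/- Assume V is symmetric positive definite with the completeness property, ρ_τ is a probability density strictly positive on (0,∞), ρ_ξ is a probability density on ℝ^l, and J : ℝ^l × ℝ^d → ℝ^d is measurable and satisfies: there exist a compact set K ⊆ ℝ^d and 0 < α < 1 with ∫ |J(y,p)|² ρ_ξ(y) dy ≤ α|p|² for all p ∉ K, and sup_{p ∈ K} ∫ |J(y,p)|² ρ_ξ(y) dy < ∞. Then there exist a compact set K' ⊆ L = ℝ^{2n} and a constant r > 0 such that for all ψ ∉ K', ∫_0^∞ ∫_{ℝ^l} H(J_L(y; e^{tA}ψ)) ρ_ξ(y) ρ_τ(t) dy dt − H(ψ) ≤ −r H(ψ). -/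

import Mathlib

open Matrix MeasureTheory

/-- Index for the coordinates of one block (particle `i`, component `j`). -/
abbrev PIdx (N d : ℕ) := Fin N × Fin d

/-- The phase space `L = ℝ^{2n}`, `n = dN`: positions indexed by `Sum.inl`, momenta by
`Sum.inr`. -/
abbrev Phase (N d : ℕ) := (PIdx N d ⊕ PIdx N d) → ℝ

/-- The Hamiltonian matrix `A = [[0, (1/M)I], [−V, 0]]`. -/
noncomputable def hamMatrix {N d : ℕ} (M : ℝ) (V : Matrix (PIdx N d) (PIdx N d) ℝ) :
    Matrix (PIdx N d ⊕ PIdx N d) (PIdx N d ⊕ PIdx N d) ℝ :=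
  Matrix.fromBlocks 0 ((1 / M) • 1) (-V) 0

/-- The energy `H(q,p) = |p|²/(2M) + (1/2)⟨q, Vq⟩`. -/
noncomputable def energy {N d : ℕ} (M : ℝ) (V : Matrix (PIdx N d) (PIdx N d) ℝ)
    (ψ : Phase N d) : ℝ :=
  (1 / (2 * M)) * (∑ x, ψ (Sum.inr x) ^ 2) +
    (1 / 2) * ((fun x => ψ (Sum.inl x)) ⬝ᵥ V.mulVec (fun x => ψ (Sum.inl x)))

/-- The momentum `p₁ ∈ ℝ^d` of particle 1. -/
def mom1 {N d : ℕ} (hN : 0 < N) (ψ : Phase N d) : Fin d → ℝ :=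
  fun j => ψ (Sum.inr ((⟨0, hN⟩ : Fin N), j))

/-- The collision map on phase space: `J_L(u;(q,p)) = (q,p')` with `p'₁ = J(u,p₁)` and
`p'ᵢ = pᵢ` for `i > 1`. -/
def JL {N d l : ℕ} (hN : 0 < N) (J : (Fin l → ℝ) → (Fin d → ℝ) → (Fin d → ℝ))
    (u : Fin l → ℝ) (ψ : Phase N d) : Phase N d := fun z =>
  match z with
  | Sum.inl x => ψ (Sum.inl x)
  | Sum.inr x => if x.1 = (⟨0, hN⟩ : Fin N) then J u (mom1 hN ψ) x.2 else ψ (Sum.inr x)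

/-- The free flow `e^{tA}ψ`. -/
noncomputable def flow {N d : ℕ} (M : ℝ) (V : Matrix (PIdx N d) (PIdx N d) ℝ) (t : ℝ)
    (ψ : Phase N d) : Phase N d :=
  (NormedSpace.exp (t • hamMatrix M V)).mulVec ψ

/-!
The flow `e^{tA}` preserves `H`, and a collision changes `H` only through `|p₁|²`, which on
average it multiplies by at most `α`, up to a bounded error. Averaging over the collision time,
the drift is therefore at most `C - (1 - α) / (2M) · F ψ`, where
`F ψ = ∫ |p₁(e^{tA} ψ)|² ρ_τ(t) dt`. `F` is continuous and 2-homogeneous, and positive off `0`: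
if `p₁` vanished along the orbit for all `t > 0`, so would every `(A^k ψ)_{p₁}`, and by the
completeness of `V` this forces `ψ = 0`. Compactness of the unit sphere gives `F ≥ c H`, and `H` is
coercive, so the drift is at most `-r H` outside a sublevel set of `H`.
-/

theorem exists_pos_mul_le_of_sq_homogeneous {E : Type*} [NormedAddCommGroup E] [NormedSpace ℝ E]
    [ProperSpace E] {f g : E → ℝ} (hf : Continuous f) (hg : Continuous g)
    (hf_smul : ∀ (a : ℝ) x, f (a • x) = a ^ 2 * f x)
    (hg_smul : ∀ (a : ℝ) x, g (a • x) = a ^ 2 * g x)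
    (hg_pos : ∀ x, x ≠ 0 → 0 < g x) :
    ∃ c, 0 < c ∧ ∀ x, c * f x ≤ g x := by
  have hf0 : f 0 = 0 := by simpa using hf_smul 0 0
  have hg0 : g 0 = 0 := by simpa using hg_smul 0 0
  rcases subsingleton_or_nontrivial E with hE | hE
  · exact ⟨1, one_pos, fun x => by simp [Subsingleton.elim x 0, hf0, hg0]⟩
  have hS := isCompact_sphere (0 : E) 1
  obtain ⟨u₀, hu₀, hmin⟩ :=
    hS.exists_isMinOn (NormedSpace.sphere_nonempty.2 zero_le_one) hg.continuousOn
  obtain ⟨B, hB⟩ := hS.bddAbove_image hf.continuousOn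
  have hgu₀ : 0 < g u₀ := hg_pos u₀ (ne_zero_of_mem_unit_sphere ⟨u₀, hu₀⟩)
  refine ⟨g u₀ / max B 1, by positivity, fun x => ?_⟩
  rcases eq_or_ne x 0 with rfl | hx
  · simp [hf0, hg0]
  have hxn : ‖x‖ ≠ 0 := norm_ne_zero_iff.2 hx
  have hu : ‖x‖⁻¹ • x ∈ Metric.sphere (0 : E) 1 := by simp [norm_smul, hxn]
  have hbound : g u₀ / max B 1 * f (‖x‖⁻¹ • x) ≤ g (‖x‖⁻¹ • x) :=
    calc g u₀ / max B 1 * f (‖x‖⁻¹ • x) ≤ g u₀ / max B 1 * max B 1 := by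
          gcongr
          exact (hB ⟨_, hu, rfl⟩).trans (le_max_left _ _)
      _ = g u₀ := div_mul_cancel₀ _ (by positivity)
      _ ≤ g (‖x‖⁻¹ • x) := hmin hu
  have hx_eq : x = ‖x‖ • ‖x‖⁻¹ • x := by rw [smul_smul, mul_inv_cancel₀ hxn, one_smul]
  rw [hx_eq, hf_smul, hg_smul, mul_left_comm]
  exact mul_le_mul_of_nonneg_left hbound (sq_nonneg _)

theorem isCompact_setOf_le_of_mul_norm_sq_le {E : Type*} [NormedAddCommGroup E] [ProperSpace E]
    {g : E → ℝ} (hg : Continuous g) {c : ℝ} (hc : 0 < c) (hgc : ∀ x, c * ‖x‖ ^ 2 ≤ g x)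
    (a : ℝ) : IsCompact {x | g x ≤ a} := by
  refine Metric.isCompact_of_isClosed_isBounded (isClosed_le hg continuous_const)
    ((isBounded_iff_forall_norm_le).2 ⟨√(a / c), fun x hx => ?_⟩)
  rw [← abs_norm]
  refine Real.abs_le_sqrt ?_
  rw [le_div_iff₀ hc, mul_comm]
  exact (hgc x).trans hx

theorem exists_isCompact_drift {E : Type*} [NormedAddCommGroup E] [ProperSpace E]
    {f g : E → ℝ} (hg : Continuous g) {c β C : ℝ} (hc : 0 < c) (hgc : ∀ x, c * ‖x‖ ^ 2 ≤ g x)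
    (hβ : 0 < β) (hf : ∀ x, f x ≤ C - β * g x) :
    ∃ K : Set E, IsCompact K ∧ ∃ r, 0 < r ∧ ∀ x ∉ K, f x ≤ -(r * g x) := by
  refine ⟨{x | g x ≤ 2 * C / β}, isCompact_setOf_le_of_mul_norm_sq_le hg hc hgc _, β / 2,
    half_pos hβ, fun x hx => ?_⟩
  have : 2 * C < β * g x := by
    have := (div_lt_iff₀ hβ).1 (not_le.1 hx)
    linarith
  linarith [hf x]

section MatrixExp

variable {ι : Type*} [Fintype ι] [DecidableEq ι]

theorem eq_zero_of_pow_mulVec_apply_eq_zero {V : Matrix ι ι ℝ} (hV : V.IsSymm) {i : ι}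
    (hspan : Submodule.span ℝ (Set.range fun k : ℕ => (V ^ k) *ᵥ Pi.single i 1) = ⊤)
    {u : ι → ℝ} (hu : ∀ k : ℕ, (V ^ k *ᵥ u) i = 0) : u = 0 := by
  -- by symmetry `(V ^ k *ᵥ u) i = u ⬝ᵥ V ^ k *ᵥ eᵢ`, so `u` is orthogonal to a spanning set
  have h : dotProductEquiv ℝ ι u = 0 := LinearMap.ext_on_range hspan fun k => by
    rw [dotProductEquiv_apply_apply, dotProduct_mulVec, dotProduct_single, mul_one,
      LinearMap.zero_apply, ← (hV.pow k).eq, vecMul_transpose, hu k]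
  exact dotProduct_self_eq_zero.1 (LinearMap.congr_fun h u)

theorem exp_transpose_mul_mul_exp {A S : Matrix ι ι ℝ} (hS : IsUnit S)
    (h : Aᵀ * S = -(S * A)) : (NormedSpace.exp A)ᵀ * S * NormedSpace.exp A = S := by
  have hSdet := (isUnit_iff_isUnit_det S).1 hS
  have hAt : Aᵀ = S * -A * S⁻¹ :=
    calc Aᵀ = Aᵀ * S * S⁻¹ := (mul_nonsing_inv_cancel_right S _ hSdet).symm
      _ = S * -A * S⁻¹ := by rw [h, mul_neg, neg_mul]
  rw [← exp_transpose, hAt, exp_conj _ _ hS, exp_neg, nonsing_inv_mul_cancel_right S _ hSdet,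
    nonsing_inv_mul_cancel_right _ S ((isUnit_iff_isUnit_det _).1 (isUnit_exp A))]

attribute [local instance] Matrix.linftyOpNormedRing Matrix.linftyOpNormedAlgebra

theorem hasDerivAt_exp_smul_mulVec (A : Matrix ι ι ℝ) (v : ι → ℝ) (t : ℝ) :
    HasDerivAt (fun t : ℝ => NormedSpace.exp (t • A) *ᵥ v)
      (NormedSpace.exp (t • A) *ᵥ (A *ᵥ v)) t := by
  let mulVecCLM : Matrix ι ι ℝ →L[ℝ] ι → ℝ := LinearMap.toContinuousLinearMap
    { toFun := fun B => B *ᵥ v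
      map_add' := fun B C => add_mulVec B C v
      map_smul' := fun a B => smul_mulVec a B v }
  refine (mulVecCLM.hasFDerivAt.comp_hasDerivAt t
    (hasDerivAt_exp_smul_const (𝕂 := ℝ) A t)).congr_deriv (mulVec_mulVec _ _ _).symm

theorem pow_mulVec_apply_eq_zero_of_exp_smul {A : Matrix ι ι ℝ} {v : ι → ℝ} {i : ι}
    (h : ∀ t : ℝ, 0 < t → (NormedSpace.exp (t • A) *ᵥ v) i = 0) (k : ℕ) :
    (A ^ k *ᵥ v) i = 0 := by
  have hpos (k : ℕ) : ∀ t ∈ Set.Ioi (0 : ℝ), (NormedSpace.exp (t • A) *ᵥ (A ^ k *ᵥ v)) i = 0 := by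
    induction k with
    | zero => simpa using h
    | succ k ih =>
      intro t ht
      have hderiv := hasDerivAt_pi.1 (hasDerivAt_exp_smul_mulVec A (A ^ k *ᵥ v) t) i
      have hzero : HasDerivAt (fun s => (NormedSpace.exp (s • A) *ᵥ (A ^ k *ᵥ v)) i) 0 t :=
        (hasDerivAt_const t 0).congr_of_eventuallyEq
          (Filter.eventually_of_mem (isOpen_Ioi.mem_nhds ht) ih)
      rw [pow_succ', ← mulVec_mulVec, hderiv.unique hzero]
  have hcont : Continuous fun t : ℝ => (NormedSpace.exp (t • A) *ᵥ (A ^ k *ᵥ v)) i :=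
    continuous_iff_continuousAt.2 fun t =>
      (hasDerivAt_pi.1 (hasDerivAt_exp_smul_mulVec A _ t) i).continuousAt
  have h0 := (isClosed_eq hcont continuous_const).closure_subset_iff.2 (hpos k)
    (by rw [closure_Ioi]; exact Set.mem_Ici.2 le_rfl)
  simpa using h0

end MatrixExp

section Hamiltonian

variable {N d : ℕ} (M : ℝ) (V : Matrix (PIdx N d) (PIdx N d) ℝ)

noncomputable def energyMatrix : Matrix (PIdx N d ⊕ PIdx N d) (PIdx N d ⊕ PIdx N d) ℝ :=
  fromBlocks V 0 0 ((1 / M) • 1)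

theorem energy_eq_dotProduct (ψ : Phase N d) :
    energy M V ψ = 1 / 2 * (ψ ⬝ᵥ energyMatrix M V *ᵥ ψ) := by
  conv_rhs => rw [← Sum.elim_comp_inl_inr ψ, energyMatrix, fromBlocks_mulVec,
    sumElim_dotProduct_sumElim]
  simp only [energy, zero_mulVec, add_zero, zero_add, smul_mulVec, one_mulVec, dotProduct,
    Pi.smul_apply, smul_eq_mul, Function.comp_def, Sum.elim_inl, Sum.elim_inr]
  simp only [Finset.mul_sum, ← Finset.sum_add_distrib]
  exact Finset.sum_congr rfl fun x _ => by ring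

theorem hamMatrix_transpose_mul_energyMatrix (hV : V.IsSymm) :
    (hamMatrix M V)ᵀ * energyMatrix M V = -(energyMatrix M V * hamMatrix M V) := by
  simp [hamMatrix, energyMatrix, fromBlocks_transpose, fromBlocks_multiply, fromBlocks_neg,
    hV.eq]

theorem isUnit_energyMatrix (hM : M ≠ 0) (hV : IsUnit V) : IsUnit (energyMatrix M V) :=
  isUnit_fromBlocks_zero₁₂.2 ⟨hV, (isUnit_iff_isUnit_det _).2 (by simp [hM])⟩

theorem energy_flow (hM : M ≠ 0) (hV : V.PosDef) (t : ℝ) (ψ : Phase N d) :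
    energy M V (flow M V t ψ) = energy M V ψ := by
  have hcons := exp_transpose_mul_mul_exp (isUnit_energyMatrix M V hM hV.isUnit)
    (A := t • hamMatrix M V) (by
      rw [transpose_smul, Matrix.smul_mul, Matrix.mul_smul,
        hamMatrix_transpose_mul_energyMatrix M V (isHermitian_iff_isSymm.1 hV.isHermitian),
        smul_neg])
  rw [energy_eq_dotProduct, energy_eq_dotProduct, flow, mulVec_mulVec, ← vecMul_transpose,
    dotProduct_mulVec, vecMul_vecMul, ← mul_assoc, hcons, ← dotProduct_mulVec]

theorem continuous_flow_apply (ψ : Phase N d) (x : PIdx N d ⊕ PIdx N d) :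
    Continuous fun t => flow M V t ψ x :=
  continuous_iff_continuousAt.2 fun t =>
    (hasDerivAt_pi.1 (hasDerivAt_exp_smul_mulVec (hamMatrix M V) ψ t) x).continuousAt

theorem hamMatrix_sq : hamMatrix M V ^ 2 = (-(1 / M)) • fromBlocks V 0 0 V := by
  simp [sq, hamMatrix, fromBlocks_multiply, fromBlocks_smul, fromBlocks_neg]

theorem hamMatrix_pow_even_mulVec_inr (m : ℕ) (w : Phase N d) (x : PIdx N d) :
    (hamMatrix M V ^ (2 * m) *ᵥ w) (Sum.inr x) = (-(1 / M)) ^ m * (V ^ m *ᵥ (w ∘ Sum.inr)) x := by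
  rw [pow_mul, hamMatrix_sq, smul_pow, fromBlocks_diagonal_pow, smul_mulVec, fromBlocks_mulVec]
  simp

theorem hamMatrix_mulVec_comp_inr (w : Phase N d) :
    (hamMatrix M V *ᵥ w) ∘ Sum.inr = -(V *ᵥ (w ∘ Sum.inl)) := by
  simp [hamMatrix, fromBlocks_mulVec, neg_mulVec]

theorem eq_zero_of_hamMatrix_pow_mulVec_inr (hM : M ≠ 0) (hV : V.PosDef) {i : PIdx N d}
    (hspan : Submodule.span ℝ (Set.range fun k : ℕ => (V ^ k) *ᵥ Pi.single i 1) = ⊤)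
    {ψ : Phase N d} (h : ∀ k : ℕ, (hamMatrix M V ^ k *ᵥ ψ) (Sum.inr i) = 0) : ψ = 0 := by
  have hVsymm := isHermitian_iff_isSymm.1 hV.isHermitian
  have hc (m : ℕ) : (-(1 / M)) ^ m ≠ 0 := pow_ne_zero _ (neg_ne_zero.2 (one_div_ne_zero hM))
  have hp : ψ ∘ Sum.inr = 0 := eq_zero_of_pow_mulVec_apply_eq_zero hVsymm hspan fun m => by
    have := h (2 * m)
    rwa [hamMatrix_pow_even_mulVec_inr, mul_eq_zero, or_iff_right (hc m)] at this
  have hVq : V *ᵥ (ψ ∘ Sum.inl) = 0 :=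
    neg_eq_zero.1 <| eq_zero_of_pow_mulVec_apply_eq_zero hVsymm hspan fun m => by
      have := h (2 * m + 1)
      rwa [pow_succ, ← mulVec_mulVec, hamMatrix_pow_even_mulVec_inr, hamMatrix_mulVec_comp_inr,
        mul_eq_zero, or_iff_right (hc m)] at this
  have hq : ψ ∘ Sum.inl = 0 :=
    mulVec_injective_iff_isUnit.2 hV.isUnit (hVq.trans (mulVec_zero V).symm)
  rw [← Sum.elim_comp_inl_inr ψ, hq, hp, Sum.elim_zero_zero]

end Hamiltonian

section Energy

variable {N d : ℕ} (M : ℝ) (V : Matrix (PIdx N d) (PIdx N d) ℝ)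

theorem continuous_energy : Continuous (energy M V) := by
  unfold energy
  fun_prop

theorem energy_smul (a : ℝ) (ψ : Phase N d) : energy M V (a • ψ) = a ^ 2 * energy M V ψ := by
  simp only [energy_eq_dotProduct, mulVec_smul, dotProduct_smul, smul_dotProduct, smul_eq_mul]
  ring

theorem energy_pos (hM : 0 < M) (hV : V.PosDef) {ψ : Phase N d} (hψ : ψ ≠ 0) :
    0 < energy M V ψ := by
  have hkin : 0 ≤ 1 / (2 * M) * ∑ x, ψ (Sum.inr x) ^ 2 := by positivity
  have hpot := hV.posSemidef.dotProduct_mulVec_nonneg fun x => ψ (Sum.inl x)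
  simp only [star_trivial] at hpot
  unfold energy
  by_cases hq : (fun x => ψ (Sum.inl x)) = 0
  · obtain ⟨x, hx⟩ : ∃ x, ψ (Sum.inr x) ≠ 0 := by
      by_contra! hp
      exact hψ (funext (Sum.rec (congrFun hq) hp))
    have : 0 < ∑ x, ψ (Sum.inr x) ^ 2 :=
      Finset.sum_pos' (fun _ _ => sq_nonneg _) ⟨x, Finset.mem_univ x, sq_pos_of_ne_zero hx⟩
    have := mul_pos (one_div_pos.2 (mul_pos two_pos hM)) this
    linarith
  · have := hV.dotProduct_mulVec_pos hq
    simp only [star_trivial] at this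
    linarith

theorem energy_nonneg (hM : 0 < M) (hV : V.PosDef) (ψ : Phase N d) : 0 ≤ energy M V ψ := by
  rcases eq_or_ne ψ 0 with rfl | hψ
  · simp [energy]
  · exact (energy_pos M V hM hV hψ).le

end Energy

section Collision

variable {N d : ℕ} (hN : 0 < N)

def mom1Sq (ψ : Phase N d) : ℝ := ∑ j, mom1 hN ψ j ^ 2

theorem mom1Sq_nonneg (ψ : Phase N d) : 0 ≤ mom1Sq hN ψ :=
  Finset.sum_nonneg fun _ _ => sq_nonneg _

theorem continuous_mom1Sq : Continuous (mom1Sq (d := d) hN) := by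
  unfold mom1Sq mom1
  fun_prop

theorem mom1Sq_smul (a : ℝ) (ψ : Phase N d) : mom1Sq hN (a • ψ) = a ^ 2 * mom1Sq hN ψ := by
  simp [mom1Sq, mom1, Finset.mul_sum, mul_pow]

theorem mom1Sq_le_energy {M : ℝ} (hM : 0 < M) {V : Matrix (PIdx N d) (PIdx N d) ℝ}
    (hV : V.PosSemidef) (ψ : Phase N d) : mom1Sq hN ψ ≤ 2 * M * energy M V ψ := by
  have hsum : mom1Sq hN ψ ≤ ∑ x, ψ (Sum.inr x) ^ 2 := by
    rw [Fintype.sum_prod_type]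
    exact Finset.single_le_sum (f := fun i => ∑ j, ψ (Sum.inr (i, j)) ^ 2)
      (fun _ _ => Finset.sum_nonneg fun _ _ => sq_nonneg _) (Finset.mem_univ _)
  have hpot := hV.dotProduct_mulVec_nonneg fun x => ψ (Sum.inl x)
  simp only [star_trivial] at hpot
  have : 2 * M * energy M V ψ = ∑ x, ψ (Sum.inr x) ^ 2
      + M * ((fun x => ψ (Sum.inl x)) ⬝ᵥ V *ᵥ fun x => ψ (Sum.inl x)) := by
    unfold energy
    field_simp
  nlinarith

variable {l : ℕ} (M : ℝ) (V : Matrix (PIdx N d) (PIdx N d) ℝ)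
  (J : (Fin l → ℝ) → (Fin d → ℝ) → Fin d → ℝ)

theorem energy_JL (y : Fin l → ℝ) (φ : Phase N d) :
    energy M V (JL hN J y φ) =
      energy M V φ + (∑ j, J y (mom1 hN φ) j ^ 2 - mom1Sq hN φ) / (2 * M) := by
  have h₀ := Finset.mem_univ (⟨0, hN⟩ : Fin N)
  have hother : ∀ i ∈ Finset.univ.erase ⟨0, hN⟩,
      ∑ j, JL hN J y φ (Sum.inr (i, j)) ^ 2 = ∑ j, φ (Sum.inr (i, j)) ^ 2 := fun i hi => by
    simp [JL, (Finset.ne_of_mem_erase hi :)]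
  have hkin : ∑ x, JL hN J y φ (Sum.inr x) ^ 2 =
      ∑ x, φ (Sum.inr x) ^ 2 + (∑ j, J y (mom1 hN φ) j ^ 2 - mom1Sq hN φ) := by
    rw [Fintype.sum_prod_type, Fintype.sum_prod_type, ← Finset.add_sum_erase _ _ h₀,
      ← Finset.add_sum_erase _ _ h₀, Finset.sum_congr rfl hother]
    simp [JL, mom1Sq, mom1]
    ring
  have hpot : (fun x => JL hN J y φ (Sum.inl x)) = fun x => φ (Sum.inl x) := rfl
  rw [energy, energy, hkin, hpot]
  ring

end Collision

section TimeAverage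

variable {N d : ℕ} (M : ℝ) (V : Matrix (PIdx N d) (PIdx N d) ℝ) (ρτ : ℝ → ℝ) (hN : 0 < N)

noncomputable def timeAvgMom1Sq (ψ : Phase N d) : ℝ :=
  ∫ t in Set.Ioi 0, mom1Sq hN (flow M V t ψ) * ρτ t

variable {M V ρτ}

theorem continuous_mom1Sq_flow (ψ : Phase N d) : Continuous fun t => mom1Sq hN (flow M V t ψ) :=
  (continuous_mom1Sq hN).comp (continuous_pi (continuous_flow_apply M V ψ))

theorem norm_mom1Sq_flow_mul_le (hM : 0 < M) (hV : V.PosDef) (t : ℝ) (ψ : Phase N d) :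
    ‖mom1Sq hN (flow M V t ψ) * ρτ t‖ ≤ 2 * M * energy M V ψ * ‖ρτ t‖ := by
  rw [norm_mul, Real.norm_of_nonneg (mom1Sq_nonneg hN _),
    ← energy_flow M V hM.ne' hV t]
  exact mul_le_mul_of_nonneg_right (mom1Sq_le_energy hN hM hV.posSemidef _) (norm_nonneg _)

theorem integrable_mom1Sq_flow_mul (hM : 0 < M) (hV : V.PosDef) (hρτ : Integrable ρτ)
    (ψ : Phase N d) : Integrable fun t => mom1Sq hN (flow M V t ψ) * ρτ t :=
  (hρτ.norm.const_mul _).mono'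
    ((continuous_mom1Sq_flow hN ψ).aestronglyMeasurable.mul hρτ.aestronglyMeasurable)
    (Filter.Eventually.of_forall fun t => norm_mom1Sq_flow_mul_le hN hM hV t ψ)

theorem timeAvgMom1Sq_smul (a : ℝ) (ψ : Phase N d) :
    timeAvgMom1Sq M V ρτ hN (a • ψ) = a ^ 2 * timeAvgMom1Sq M V ρτ hN ψ := by
  simp only [timeAvgMom1Sq, flow, mulVec_smul, mom1Sq_smul, mul_assoc, integral_const_mul]

theorem continuous_timeAvgMom1Sq (hM : 0 < M) (hV : V.PosDef) (hρτ : Integrable ρτ) :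
    Continuous (timeAvgMom1Sq M V ρτ hN) := by
  refine continuous_iff_continuousAt.2 fun ψ₀ => continuousAt_of_dominated
    (bound := fun t => 2 * M * (energy M V ψ₀ + 1) * ‖ρτ t‖)
    (Filter.Eventually.of_forall fun ψ =>
      ((continuous_mom1Sq_flow hN ψ).aestronglyMeasurable.mul hρτ.aestronglyMeasurable).restrict)
    ?_ (hρτ.norm.const_mul _).restrict (Filter.Eventually.of_forall fun t =>
      (((continuous_mom1Sq hN).comp (continuous_const.matrix_mulVec continuous_id)).mul
        continuous_const).continuousAt)
  filter_upwards [(continuous_energy M V).continuousAt.eventually (gt_mem_nhds (lt_add_one _))]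
    with ψ hψ
  refine Filter.Eventually.of_forall fun t => (norm_mom1Sq_flow_mul_le hN hM hV t ψ).trans ?_
  gcongr

theorem timeAvgMom1Sq_pos (hd : 0 < d) (hM : 0 < M) (hV : V.PosDef) (hρτ : Integrable ρτ)
    (hρτpos : ∀ t, 0 < t → 0 < ρτ t)
    (hspan : Submodule.span ℝ (Set.range fun k : ℕ =>
      (V ^ k) *ᵥ Pi.single ((⟨0, hN⟩ : Fin N), (⟨0, hd⟩ : Fin d)) 1) = ⊤)
    {ψ : Phase N d} (hψ : ψ ≠ 0) : 0 < timeAvgMom1Sq M V ρτ hN ψ := by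
  obtain ⟨t₀, ht₀, hne⟩ : ∃ t, 0 < t ∧ flow M V t ψ (Sum.inr (⟨0, hN⟩, ⟨0, hd⟩)) ≠ 0 := by
    by_contra! h
    exact hψ (eq_zero_of_hamMatrix_pow_mulVec_inr M V hM.ne' hV hspan
      (pow_mulVec_apply_eq_zero_of_exp_smul h))
  set U := Set.Ioi 0 ∩ {t | 0 < mom1Sq hN (flow M V t ψ)}
  have hU : IsOpen U := isOpen_Ioi.inter (isOpen_lt continuous_const (continuous_mom1Sq_flow hN ψ))
  have ht₀U : t₀ ∈ U :=
    ⟨ht₀, show 0 < mom1Sq hN (flow M V t₀ ψ) from Finset.sum_pos' (fun _ _ => sq_nonneg _)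
      ⟨⟨0, hd⟩, Finset.mem_univ _, sq_pos_of_ne_zero hne⟩⟩
  rw [timeAvgMom1Sq, setIntegral_pos_iff_support_of_nonneg_ae
    (ae_restrict_of_forall_mem measurableSet_Ioi fun t ht =>
      mul_nonneg (mom1Sq_nonneg hN _) (hρτpos t ht).le)
    (integrable_mom1Sq_flow_mul hN hM hV hρτ ψ).integrableOn]
  exact (hU.measure_pos volume ⟨t₀, ht₀U⟩).trans_le
    (measure_mono fun t ht => ⟨(mul_pos ht.2 (hρτpos t ht.1)).ne', ht.1⟩)

end TimeAverage

section Drift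

variable {N d l : ℕ} {M : ℝ} {V : Matrix (PIdx N d) (PIdx N d) ℝ} (hN : 0 < N)
  {J : (Fin l → ℝ) → (Fin d → ℝ) → Fin d → ℝ} {ρξ : (Fin l → ℝ) → ℝ} {α C : ℝ}

theorem integral_energy_JL_le (hM : 0 < M) (hV : V.PosSemidef) (hρξ1 : ∫ y, ρξ y = 1)
    (hα : 0 ≤ α) (hC : 0 ≤ C)
    (hJ : ∀ p, ∫ y, (∑ j, J y p j ^ 2) * ρξ y ≤ α * ∑ j, p j ^ 2 + C) (φ : Phase N d) :
    ∫ y, energy M V (JL hN J y φ) * ρξ y ≤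
      energy M V φ + (C - (1 - α) * mom1Sq hN φ) / (2 * M) := by
  have hρξ : Integrable ρξ := .of_integral_ne_zero (by rw [hρξ1]; exact one_ne_zero)
  have hk := mom1Sq_le_energy hN hM hV φ
  set W := fun y => (∑ j, J y (mom1 hN φ) j ^ 2) * ρξ y
  set a := energy M V φ - mom1Sq hN φ / (2 * M)
  have hsplit : (fun y => energy M V (JL hN J y φ) * ρξ y) = fun y => a * ρξ y + W y / (2 * M) := by
    funext y
    rw [energy_JL]
    ring
  by_cases hW : Integrable W
  · rw [hsplit, integral_add (hρξ.const_mul a) (hW.div_const _), integral_const_mul,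
      integral_div, hρξ1]
    have hWle : ∫ y, W y ≤ α * mom1Sq hN φ + C := hJ (mom1 hN φ)
    calc a * 1 + (∫ y, W y) / (2 * M) ≤ a * 1 + (α * mom1Sq hN φ + C) / (2 * M) := by gcongr
      _ = _ := by ring
  · have hW_eq : W = fun y => 2 * M * (energy M V (JL hN J y φ) * ρξ y - a * ρξ y) := by
      funext y
      simp only [W, a, energy_JL]
      field_simp
      ring
    rw [integral_undef fun h => hW (hW_eq ▸ (h.sub (hρξ.const_mul a)).const_mul (2 * M))]
    have : 0 ≤ 2 * M * energy M V φ + C - (1 - α) * mom1Sq hN φ := by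
      nlinarith [mom1Sq_nonneg hN φ]
    calc (0 : ℝ) ≤ (2 * M * energy M V φ + C - (1 - α) * mom1Sq hN φ) / (2 * M) := by positivity
      _ = _ := by field_simp; ring

theorem setIntegral_energy_JL_flow_le (hM : 0 < M) (hV : V.PosDef) {ρτ : ℝ → ℝ}
    (hρτ : Integrable ρτ) (hρτ0 : ∀ t, 0 < t → 0 ≤ ρτ t) (hρτ1 : ∫ t in Set.Ioi 0, ρτ t = 1)
    (hρξ0 : ∀ y, 0 ≤ ρξ y) (hρξ1 : ∫ y, ρξ y = 1) (hα : 0 ≤ α) (hC : 0 ≤ C)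
    (hJ : ∀ p, ∫ y, (∑ j, J y p j ^ 2) * ρξ y ≤ α * ∑ j, p j ^ 2 + C) (ψ : Phase N d) :
    ∫ t in Set.Ioi 0, (∫ y, energy M V (JL hN J y (flow M V t ψ)) * ρξ y) * ρτ t ≤
      energy M V ψ + (C - (1 - α) * timeAvgMom1Sq M V ρτ hN ψ) / (2 * M) := by
  set g := fun t => (energy M V ψ + C / (2 * M)) * ρτ t
    - (1 - α) / (2 * M) * (mom1Sq hN (flow M V t ψ) * ρτ t)
  have hg : Integrable g (volume.restrict (Set.Ioi 0)) :=
    ((hρτ.const_mul _).sub ((integrable_mom1Sq_flow_mul hN hM hV hρτ ψ).const_mul _)).restrict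
  calc _ ≤ ∫ t in Set.Ioi 0, g t := by
        refine integral_mono_of_nonneg (ae_restrict_of_forall_mem measurableSet_Ioi fun t ht =>
          mul_nonneg (integral_nonneg fun y => mul_nonneg (energy_nonneg M V hM hV _) (hρξ0 y))
            (hρτ0 t ht)) hg (ae_restrict_of_forall_mem measurableSet_Ioi fun t ht => ?_)
        have := integral_energy_JL_le hN hM hV.posSemidef hρξ1 hα hC hJ (flow M V t ψ)
        rw [energy_flow M V hM.ne' hV] at this
        calc _ ≤ (energy M V ψ + (C - (1 - α) * mom1Sq hN (flow M V t ψ)) / (2 * M)) * ρτ t :=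
              mul_le_mul_of_nonneg_right this (hρτ0 t ht)
          _ = g t := by ring
    _ = _ := by
        rw [integral_sub ((hρτ.const_mul _).restrict)
          ((integrable_mom1Sq_flow_mul hN hM hV hρτ ψ).const_mul _).restrict, integral_const_mul,
          integral_const_mul, hρτ1, timeAvgMom1Sq]
        ring

end Drift

theorem drift_condition_general (N d l : ℕ) (hN : 0 < N) (hd : 0 < d) (M : ℝ) (hM : 0 < M)
    (V : Matrix (PIdx N d) (PIdx N d) ℝ) (hV : V.PosDef)
    (hcompl : Submodule.span ℝ
        (Set.range fun k : ℕ =>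
          (V ^ k).mulVec (Pi.single ((⟨0, hN⟩ : Fin N), (⟨0, hd⟩ : Fin d)) 1)) = ⊤)
    (J : (Fin l → ℝ) → (Fin d → ℝ) → (Fin d → ℝ))
    (ρτ : ℝ → ℝ) (hρτpos : ∀ t, 0 < t → 0 < ρτ t)
    (hρτzero : ∀ t, t ≤ 0 → ρτ t = 0) (hρτint : ∫ t, ρτ t = 1)
    (ρξ : (Fin l → ℝ) → ℝ) (hρξ0 : ∀ y, 0 ≤ ρξ y)
    (hρξint : ∫ y, ρξ y = 1)
    (K : Set (Fin d → ℝ)) (α : ℝ) (hα0 : 0 < α) (hα1 : α < 1)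
    (hJdrift : ∀ p ∉ K, ∫ y, (∑ j, J y p j ^ 2) * ρξ y ≤ α * ∑ j, p j ^ 2)
    (hJbdd : ∃ Cb : ℝ, ∀ p ∈ K, ∫ y, (∑ j, J y p j ^ 2) * ρξ y ≤ Cb) :
    ∃ K' : Set (Phase N d), IsCompact K' ∧ ∃ r : ℝ, 0 < r ∧
      ∀ ψ : Phase N d, ψ ∉ K' →
        (∫ t in Set.Ioi (0 : ℝ),
            (∫ y, energy M V (JL hN J y (flow M V t ψ)) * ρξ y) * ρτ t)
          - energy M V ψ ≤ -(r * energy M V ψ) := by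
  have hρτ : Integrable ρτ := .of_integral_ne_zero (by rw [hρτint]; exact one_ne_zero)
  have hρτ1 : ∫ t in Set.Ioi 0, ρτ t = 1 := by
    rwa [setIntegral_eq_integral_of_forall_compl_eq_zero (s := Set.Ioi 0) fun t ht =>
      hρτzero t (not_lt.1 ht)]
  obtain ⟨Cb, hCb⟩ := hJbdd
  have hJ (p : Fin d → ℝ) : ∫ y, (∑ j, J y p j ^ 2) * ρξ y ≤ α * ∑ j, p j ^ 2 + max Cb 0 := by
    have : 0 ≤ α * ∑ j, p j ^ 2 := by positivity
    by_cases hp : p ∈ K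
    · linarith [hCb p hp, le_max_left Cb 0]
    · linarith [hJdrift p hp, le_max_right Cb 0]
  obtain ⟨c, hc, hcF⟩ := exists_pos_mul_le_of_sq_homogeneous (continuous_energy M V)
    (continuous_timeAvgMom1Sq hN hM hV hρτ) (energy_smul M V) (timeAvgMom1Sq_smul hN)
    fun ψ hψ => timeAvgMom1Sq_pos hN hd hM hV hρτ hρτpos hcompl hψ
  obtain ⟨cE, hcE, hcEψ⟩ := exists_pos_mul_le_of_sq_homogeneous
    (f := fun ψ : Phase N d => ‖ψ‖ ^ 2) (continuous_norm.pow 2)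
    (continuous_energy M V) (fun a ψ => by rw [norm_smul, mul_pow, Real.norm_eq_abs, sq_abs])
    (energy_smul M V) fun ψ hψ => energy_pos M V hM hV hψ
  refine exists_isCompact_drift (continuous_energy M V) hcE hcEψ
    (β := (1 - α) * c / (2 * M)) (C := max Cb 0 / (2 * M))
    (by have := sub_pos.2 hα1; positivity) fun ψ => ?_
  have hstep := setIntegral_energy_JL_flow_le hN hM hV hρτ (fun t ht => (hρτpos t ht).le) hρτ1
    hρξ0 hρξint hα0.le (le_max_right Cb 0) hJ ψ
  calc _ ≤ (max Cb 0 - (1 - α) * timeAvgMom1Sq M V ρτ hN ψ) / (2 * M) := by linarith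
    _ ≤ (max Cb 0 - (1 - α) * (c * energy M V ψ)) / (2 * M) := by
      gcongr
      exact hcF ψ
    _ = _ := by ring

/-- Drift (Lyapunov) condition for the embedded chain: if the collision map decreases large
kinetic energies on average, then the mean energy after one step decreases proportionally to
the energy, outside a compact set `K'`. -/
theorem drift_condition (N d l : ℕ) (hN : 0 < N) (hd : 0 < d) (M : ℝ) (hM : 0 < M)
    (V : Matrix (PIdx N d) (PIdx N d) ℝ) (hV : V.PosDef)
    (hcompl : Submodule.span ℝ
        (Set.range fun k : ℕ =>
          (V ^ k).mulVec (Pi.single ((⟨0, hN⟩ : Fin N), (⟨0, hd⟩ : Fin d)) 1)) = ⊤)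
    (J : (Fin l → ℝ) → (Fin d → ℝ) → (Fin d → ℝ))
    (hJmeas : Measurable fun y : (Fin l → ℝ) × (Fin d → ℝ) => J y.1 y.2)
    (ρτ : ℝ → ℝ) (hρτmeas : Measurable ρτ) (hρτpos : ∀ t, 0 < t → 0 < ρτ t)
    (hρτzero : ∀ t, t ≤ 0 → ρτ t = 0) (hρτint : ∫ t, ρτ t = 1)
    (ρξ : (Fin l → ℝ) → ℝ) (hρξmeas : Measurable ρξ) (hρξ0 : ∀ y, 0 ≤ ρξ y)
    (hρξint : ∫ y, ρξ y = 1)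
    (K : Set (Fin d → ℝ)) (hK : IsCompact K) (α : ℝ) (hα0 : 0 < α) (hα1 : α < 1)
    (hJdrift : ∀ p ∉ K, ∫ y, (∑ j, J y p j ^ 2) * ρξ y ≤ α * ∑ j, p j ^ 2)
    (hJbdd : ∃ Cb : ℝ, ∀ p ∈ K, ∫ y, (∑ j, J y p j ^ 2) * ρξ y ≤ Cb) :
    ∃ K' : Set (Phase N d), IsCompact K' ∧ ∃ r : ℝ, 0 < r ∧
      ∀ ψ : Phase N d, ψ ∉ K' →
        (∫ t in Set.Ioi (0 : ℝ),
            (∫ y, energy M V (JL hN J y (flow M V t ψ)) * ρξ y) * ρτ t)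
          - energy M V ψ ≤ -(r * energy M V ψ) :=
  drift_condition_general N d l hN hd M hM V hV hcompl J ρτ hρτpos hρτzero hρτint ρξ hρξ0 hρξint K α
    hα0 hα1 hJdrift hJbdd
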